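/- For nonnegative integers n ≥ m ≥ 0, the sum over k from 0 to n of binomial(n+m+1, k) · (−1)^k · S₂(n+m−k, n−k) equals (−1)^(n+m) · m!. -/

import Mathlib

/-- Stirling numbers of the second kind. -/
def S2 : ℕ → ℕ → ℕ
  | 0, 0 => 1
  | 0, _ + 1 => 0
  | _ + 1, 0 => 0
  | n + 1, k + 1 => S2 n k + (k + 1) * S2 n (k + 1)

open Finset

lemma S2_eq_zero : ∀ n k : ℕ, n < k → S2 n k = 0
  | 0, _ + 1, _ => rfl
  | n + 1, k + 1, h => by
    have h' : n < k := Nat.lt_of_succ_lt_succ h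
    rw [S2, S2_eq_zero n k h', S2_eq_zero n (k + 1) (Nat.lt_succ_of_lt h')]
    simp

lemma S2_self : ∀ n : ℕ, S2 n n = 1
  | 0 => rfl
  | n + 1 => by
    rw [S2, S2_self n, S2_eq_zero n (n + 1) (Nat.lt_succ_self n)]
    simp

lemma S2_succ (n k : ℕ) : S2 (n + 1) (k + 1) = S2 n k + (k + 1) * S2 n (k + 1) := rfl

/-- The shifted extension of `x ↦ S2 (x + m) x` to "negative arguments":
`G m j` corresponds to the polynomial value of `S2 (x + m) x` at `x = j - (m + 1)`. -/
def G : ℕ → ℕ → ℤ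
  | 0, _ => 1
  | m + 1, 0 => (m + 1).factorial
  | m + 1, j + 1 => G (m + 1) j + ((j : ℤ) - m - 1) * G m j

lemma G_zero_left (j : ℕ) : G 0 j = 1 := by cases j <;> rfl

lemma S2_succ_zero (n : ℕ) : S2 (n + 1) 0 = 0 := rfl
lemma G_succ_zero (m : ℕ) : G (m + 1) 0 = (m + 1).factorial := rfl
lemma G_succ_succ (m j : ℕ) : G (m + 1) (j + 1) = G (m + 1) j + ((j : ℤ) - m - 1) * G m j := rfl

lemma G_zero (m : ℕ) : G m 0 = m.factorial := by
  cases m with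
  | zero => rfl
  | succ m => rfl

lemma G_eq_zero : ∀ m j : ℕ, 1 ≤ j → j ≤ m → G m j = 0
  | 0, j, h1, h2 => by omega
  | m + 1, 0, h1, _ => by omega
  | m + 1, j + 1, _, h => by
    rw [G_succ_succ]
    cases j with
    | zero =>
      rw [G_succ_zero, G_zero]
      push_cast [Nat.factorial_succ]
      ring
    | succ j =>
      have h1 : 1 ≤ j + 1 := by omega
      have h2 : j + 1 ≤ m := by omega
      rw [G_eq_zero (m + 1) (j + 1) h1 (by omega), G_eq_zero m (j + 1) h1 h2]
      ring

lemma G_shift : ∀ m j : ℕ, G m (j + (m + 1)) = (S2 (j + m) j : ℤ)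
  | 0, j => by rw [G_zero_left, Nat.add_zero, S2_self]; norm_num
  | m + 1, 0 => by
    have e : 0 + (m + 1 + 1) = (m + 1) + 1 := by omega
    rw [e, G_succ_succ, G_eq_zero (m + 1) (m + 1) (by omega) le_rfl]
    have e2 : 0 + (m + 1) = m + 1 := by omega
    rw [e2, S2_succ_zero]
    push_cast
    ring
  | m + 1, j + 1 => by
    have e1 : j + 1 + (m + 1 + 1) = (j + (m + 1 + 1)) + 1 := by omega
    rw [e1, G_succ_succ]
    have e2 : j + (m + 1 + 1) = j + ((m + 1) + 1) := by omega
    have e3 : j + (m + 1 + 1) = (j + 1) + (m + 1) := by omega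
    rw [show G (m + 1) (j + (m + 1 + 1)) = (S2 (j + (m + 1)) j : ℤ) from G_shift (m + 1) j,
      show G m (j + (m + 1 + 1)) = G m ((j + 1) + (m + 1)) from by rw [← e3],
      G_shift m (j + 1)]
    have e5 : j + 1 + (m + 1) = (j + (m + 1)) + 1 := by omega
    rw [e5, S2_succ]
    have e6 : j + 1 + m = j + (m + 1) := by omega
    rw [e6]
    push_cast
    ring

/-- `f` is a ℤ-linear combination of binomial functions `x ↦ C(x, d)` for `d ≤ D`. -/
def IsBD (D : ℕ) (f : ℕ → ℤ) : Prop :=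
  ∃ a : ℕ → ℤ, (∀ d, D < d → a d = 0) ∧
    ∀ x, f x = ∑ d ∈ Finset.range (D + 1), a d * (x.choose d : ℤ)

lemma isBD_const (D : ℕ) (c : ℤ) : IsBD D (fun _ => c) := by
  refine ⟨fun d => if d = 0 then c else 0, fun d hd => if_neg (by omega), fun x => ?_⟩
  rw [Finset.sum_eq_single 0 (fun b _ hb => by simp [if_neg hb]) (by simp)]
  simp

lemma isBD_mono {D D' : ℕ} {f : ℕ → ℤ} (h : D ≤ D') (hf : IsBD D f) : IsBD D' f := by
  obtain ⟨a, ha0, ha⟩ := hf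
  refine ⟨a, fun d hd => ha0 d (by omega), fun x => ?_⟩
  rw [ha x]
  refine Finset.sum_subset (Finset.range_subset_range.2 (by omega)) fun d hd hnd => ?_
  rw [ha0 d (by simp only [Finset.mem_range] at hnd; omega)]
  ring

lemma isBD_add {D : ℕ} {f g : ℕ → ℤ} (hf : IsBD D f) (hg : IsBD D g) :
    IsBD D (fun x => f x + g x) := by
  obtain ⟨a, ha0, ha⟩ := hf; obtain ⟨b, hb0, hb⟩ := hg
  refine ⟨fun d => a d + b d, fun d hd => by simp [ha0 d hd, hb0 d hd], fun x => ?_⟩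
  show f x + g x = _
  rw [ha x, hb x, ← Finset.sum_add_distrib]
  exact Finset.sum_congr rfl fun d _ => by ring

lemma isBD_smul {D : ℕ} {f : ℕ → ℤ} (c : ℤ) (hf : IsBD D f) :
    IsBD D (fun x => c * f x) := by
  obtain ⟨a, ha0, ha⟩ := hf
  refine ⟨fun d => c * a d, fun d hd => by simp [ha0 d hd], fun x => ?_⟩
  show c * f x = _
  rw [ha x, Finset.mul_sum]
  exact Finset.sum_congr rfl fun d _ => by ring

lemma isBD_shift {D : ℕ} {f : ℕ → ℤ} (hf : IsBD D f) :
    IsBD D (fun x => f (x + 1)) := by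
  obtain ⟨a, ha0, ha⟩ := hf
  refine ⟨fun d => a d + a (d + 1),
    fun d hd => by simp [ha0 d hd, ha0 (d + 1) (by omega)], fun x => ?_⟩
  show f (x + 1) = ∑ d ∈ Finset.range (D + 1), (a d + a (d + 1)) * (x.choose d : ℤ)
  have h1 : f (x + 1)
      = (∑ d ∈ Finset.range D, a (d + 1) * ((x + 1).choose (d + 1) : ℤ)) + a 0 := by
    rw [ha (x + 1), Finset.sum_range_succ']
    simp
  have h2 : ∀ d : ℕ, ((x + 1).choose (d + 1) : ℤ) = (x.choose d : ℤ) + (x.choose (d + 1) : ℤ) := by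
    intro d
    rw [Nat.choose_succ_succ x d]
    push_cast
    ring
  have h3 : f (x + 1) = (∑ d ∈ Finset.range D, a (d + 1) * (x.choose d : ℤ))
      + ((∑ d ∈ Finset.range D, a (d + 1) * (x.choose (d + 1) : ℤ)) + a 0) := by
    rw [h1]
    rw [Finset.sum_congr rfl fun d (_ : d ∈ Finset.range D) => by rw [h2 d]]
    rw [Finset.sum_congr rfl fun d (_ : d ∈ Finset.range D) => (by ring :
      a (d + 1) * ((x.choose d : ℤ) + (x.choose (d + 1) : ℤ))
        = a (d + 1) * (x.choose d : ℤ) + a (d + 1) * (x.choose (d + 1) : ℤ))]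
    rw [Finset.sum_add_distrib]
    ring
  have h4 : (∑ d ∈ Finset.range D, a (d + 1) * (x.choose (d + 1) : ℤ)) + a 0
      = ∑ d ∈ Finset.range (D + 1), a d * (x.choose d : ℤ) := by
    rw [Finset.sum_range_succ']
    simp
  have h5 : ∑ d ∈ Finset.range D, a (d + 1) * (x.choose d : ℤ)
      = ∑ d ∈ Finset.range (D + 1), a (d + 1) * (x.choose d : ℤ) := by
    rw [Finset.sum_range_succ, ha0 (D + 1) (by omega)]
    ring
  rw [h3, h4, h5, ← Finset.sum_add_distrib]
  exact Finset.sum_congr rfl fun d _ => by ring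

lemma mul_choose_eq (x d : ℕ) :
    (x : ℤ) * (x.choose d : ℤ)
      = ((d : ℤ) + 1) * (x.choose (d + 1) : ℤ) + (d : ℤ) * (x.choose d : ℤ) := by
  rcases le_or_gt d x with h | h
  · have key : x.choose (d + 1) * (d + 1) = x.choose d * (x - d) := Nat.choose_succ_right_eq x d
    have h2 : ((x.choose (d + 1) * (d + 1) : ℕ) : ℤ) = ((x.choose d * (x - d) : ℕ) : ℤ) := by
      rw [key]
    push_cast [Nat.cast_sub h] at h2
    linarith
  · rw [Nat.choose_eq_zero_of_lt h, Nat.choose_eq_zero_of_lt (by omega)]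
    push_cast
    ring

lemma isBD_mulX {D : ℕ} {f : ℕ → ℤ} (hf : IsBD D f) :
    IsBD (D + 1) (fun x => (x : ℤ) * f x) := by
  obtain ⟨a, ha0, ha⟩ := hf
  refine ⟨fun d => (d : ℤ) * a d + (d : ℤ) * a (d - 1),
    fun d hd => by simp [ha0 d (by omega), ha0 (d - 1) (by omega)], fun x => ?_⟩
  show (x : ℤ) * f x = _
  have h1 : (x : ℤ) * f x = ∑ d ∈ Finset.range (D + 1),
      (a d * (((d : ℤ) + 1) * (x.choose (d + 1) : ℤ)) + (d : ℤ) * a d * (x.choose d : ℤ)) := by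
    rw [ha x, Finset.mul_sum]
    refine Finset.sum_congr rfl fun d _ => ?_
    have h := mul_choose_eq x d
    calc (x : ℤ) * (a d * (x.choose d : ℤ)) = a d * ((x:ℤ) * (x.choose d : ℤ)) := by ring
      _ = a d * (((d : ℤ) + 1) * (x.choose (d + 1) : ℤ) + (d : ℤ) * (x.choose d : ℤ)) := by rw [h]
      _ = _ := by ring
  rw [h1, Finset.sum_add_distrib]
  have h2 : ∑ d ∈ Finset.range (D + 1), a d * (((d : ℤ) + 1) * (x.choose (d + 1) : ℤ))
      = ∑ d ∈ Finset.range (D + 2), (d : ℤ) * a (d - 1) * (x.choose d : ℤ) := by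
    conv_rhs => rw [Finset.sum_range_succ']
    simp only [Nat.add_sub_cancel, Nat.cast_zero, zero_mul, add_zero]
    refine Finset.sum_congr rfl fun d _ => ?_
    push_cast
    ring
  have h3 : ∑ d ∈ Finset.range (D + 1), (d : ℤ) * a d * (x.choose d : ℤ)
      = ∑ d ∈ Finset.range (D + 2), (d : ℤ) * a d * (x.choose d : ℤ) := by
    rw [Finset.sum_range_succ _ (D + 1), ha0 (D + 1) (by omega)]
    ring
  rw [h2, h3, ← Finset.sum_add_distrib]
  exact Finset.sum_congr rfl fun d _ => by ring

lemma hockey (x d : ℕ) : ∑ j ∈ Finset.range x, (j.choose d : ℤ) = (x.choose (d + 1) : ℤ) := by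
  induction x with
  | zero => simp
  | succ x ih =>
      rw [Finset.sum_range_succ, ih, Nat.choose_succ_succ x d]
      push_cast
      ring

lemma isBD_partialSum {D : ℕ} {f : ℕ → ℤ} (hf : IsBD D f) :
    IsBD (D + 1) (fun x => ∑ j ∈ Finset.range x, f j) := by
  obtain ⟨a, ha0, ha⟩ := hf
  refine ⟨fun d => if d = 0 then 0 else a (d - 1),
    fun d hd => by
      show (if d = 0 then 0 else a (d - 1)) = 0
      rw [if_neg (by omega), ha0 (d - 1) (by omega)], fun x => ?_⟩
  show ∑ j ∈ Finset.range x, f j = _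
  have h1 : ∑ j ∈ Finset.range x, f j
      = ∑ d ∈ Finset.range (D + 1), a d * (x.choose (d + 1) : ℤ) := by
    rw [Finset.sum_congr rfl fun j (_ : j ∈ Finset.range x) => ha j, Finset.sum_comm]
    refine Finset.sum_congr rfl fun d _ => ?_
    rw [← Finset.mul_sum, hockey]
  rw [h1, Finset.sum_range_succ' _ (D + 1)]
  simp only [Nat.add_sub_cancel, if_neg (Nat.succ_ne_zero _)]
  simp

lemma isBD_congr {D : ℕ} {f g : ℕ → ℤ} (h : ∀ x, f x = g x) (hf : IsBD D f) : IsBD D g := by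
  obtain ⟨a, ha0, ha⟩ := hf
  exact ⟨a, ha0, fun x => by rw [← h x]; exact ha x⟩

lemma G_formula (m : ℕ) : ∀ j, G (m + 1) j
    = (((m + 1).factorial : ℤ) + ∑ i ∈ Finset.range j, ((i : ℤ) * G m i + (-(m : ℤ) - 1) * G m i))
  | 0 => by rw [G_succ_zero]; simp
  | j + 1 => by
    rw [G_succ_succ, G_formula m j, Finset.sum_range_succ]
    ring

lemma G_isBD : ∀ m : ℕ, IsBD (2 * m) (G m)
  | 0 => isBD_congr (fun j => (G_zero_left j).symm) (isBD_const 0 1)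
  | m + 1 => by
    have ih := G_isBD m
    have h1 : IsBD (2 * m + 1) (fun i => (i : ℤ) * G m i + (-(m : ℤ) - 1) * G m i) :=
      isBD_add (isBD_mulX ih) (isBD_mono (by omega) (isBD_smul (-(m : ℤ) - 1) ih))
    have h2 : IsBD (2 * m + 2)
        (fun j => ∑ i ∈ Finset.range j, ((i : ℤ) * G m i + (-(m : ℤ) - 1) * G m i)) :=
      isBD_partialSum h1
    have h3 := isBD_add (isBD_const (2 * m + 2) ((m + 1).factorial : ℤ)) h2
    have h4 : IsBD (2 * m + 2) (G (m + 1)) :=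
      isBD_congr (fun j => (G_formula m j).symm) h3
    rw [show 2 * (m + 1) = 2 * m + 2 by ring]
    exact h4

lemma alt_choose_choose {N d : ℕ} (h : d < N) :
    ∑ k ∈ Finset.range (N + 1), (-1 : ℤ) ^ k * (N.choose k : ℤ) * (k.choose d : ℤ) = 0 := by
  rw [show N + 1 = d + (N - d + 1) by omega, Finset.sum_range_add]
  have h1 : ∑ k ∈ Finset.range d, (-1 : ℤ) ^ k * (N.choose k : ℤ) * (k.choose d : ℤ) = 0 := by
    refine Finset.sum_eq_zero fun k hk => ?_
    rw [Nat.choose_eq_zero_of_lt (Finset.mem_range.1 hk)]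
    push_cast
    ring
  rw [h1, zero_add]
  have h2 : ∀ i ∈ Finset.range (N - d + 1),
      (-1 : ℤ) ^ (d + i) * (N.choose (d + i) : ℤ) * ((d + i).choose d : ℤ)
        = ((-1 : ℤ) ^ d * (N.choose d : ℤ)) * ((-1 : ℤ) ^ i * ((N - d).choose i : ℤ)) := by
    intro i hi
    have hi' : i ≤ N - d := by simp only [Finset.mem_range] at hi; omega
    have hc : N.choose (d + i) * (d + i).choose d = N.choose d * (N - d).choose (d + i - d) :=
      Nat.choose_mul (by omega)
    rw [show d + i - d = i by omega] at hc
    have hc' : (N.choose (d + i) : ℤ) * ((d + i).choose d : ℤ)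
        = (N.choose d : ℤ) * ((N - d).choose i : ℤ) := by exact_mod_cast hc
    rw [pow_add]
    linear_combination ((-1 : ℤ) ^ d * (-1 : ℤ) ^ i) * hc'
  rw [Finset.sum_congr rfl h2, ← Finset.mul_sum,
    Int.alternating_sum_range_choose_of_ne (show N - d ≠ 0 by omega), mul_zero]

lemma isBD_vanish {D N : ℕ} {f : ℕ → ℤ} (hf : IsBD D f) (h : D < N) :
    ∑ k ∈ Finset.range (N + 1), (-1 : ℤ) ^ k * (N.choose k : ℤ) * f k = 0 := by
  obtain ⟨a, _, ha⟩ := hf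
  have key : ∀ k, (-1 : ℤ) ^ k * (N.choose k : ℤ) * f k
      = ∑ d ∈ Finset.range (D + 1), a d * ((-1 : ℤ) ^ k * (N.choose k : ℤ) * (k.choose d : ℤ)) :=
    fun k => by
      rw [ha k, Finset.mul_sum]
      exact Finset.sum_congr rfl fun d _ => by ring
  rw [Finset.sum_congr rfl fun k _ => key k, Finset.sum_comm]
  refine Finset.sum_eq_zero fun d hd => ?_
  rw [← Finset.mul_sum,
    alt_choose_choose (show d < N by simp only [Finset.mem_range] at hd; omega), mul_zero]

theorem stmt_6 (n m : ℕ) (h : m ≤ n) :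
    ∑ k ∈ Finset.range (n + 1),
      ((n + m + 1).choose k : ℤ) * (-1 : ℤ) ^ k * (S2 (n + m - k) (n - k) : ℤ)
      = (-1 : ℤ) ^ (n + m) * (m.factorial : ℤ) := by
  have hv : ∑ k ∈ Finset.range (n + m + 1 + 1),
      (-1 : ℤ) ^ k * ((n + m + 1).choose k : ℤ) * G m k = 0 :=
    isBD_vanish (G_isBD m) (by omega)
  rw [show n + m + 1 + 1 = (m + 1) + (n + 1) by omega, Finset.sum_range_add] at hv
  set S : ℤ := ∑ i ∈ Finset.range (n + 1),
      (-1 : ℤ) ^ i * ((n + m + 1).choose (m + 1 + i) : ℤ) * (S2 (i + m) i : ℤ) with hS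
  have hfirst : ∑ j ∈ Finset.range (m + 1),
      (-1 : ℤ) ^ j * ((n + m + 1).choose j : ℤ) * G m j = (m.factorial : ℤ) := by
    rw [Finset.sum_eq_single 0 (fun j hj hj0 => by
      rw [G_eq_zero m j (by omega) (by simp only [Finset.mem_range] at hj; omega)]
      ring) (by simp)]
    rw [G_zero]
    simp
  have hsecond : ∑ i ∈ Finset.range (n + 1),
      (-1 : ℤ) ^ (m + 1 + i) * ((n + m + 1).choose (m + 1 + i) : ℤ) * G m (m + 1 + i)
      = (-1 : ℤ) ^ (m + 1) * S := by
    rw [hS, Finset.mul_sum]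
    refine Finset.sum_congr rfl fun i _ => ?_
    have hg : G m (m + 1 + i) = (S2 (i + m) i : ℤ) := by
      rw [show m + 1 + i = i + (m + 1) by omega]
      exact G_shift m i
    rw [hg, pow_add]
    ring
  rw [hfirst, hsecond] at hv
  -- now transform the goal's sum into (-1)^n * S
  have hrefl := Finset.sum_range_reflect
    (fun k => ((n + m + 1).choose k : ℤ) * (-1 : ℤ) ^ k * (S2 (n + m - k) (n - k) : ℤ)) (n + 1)
  rw [← hrefl]
  have hterm : ∀ i ∈ Finset.range (n + 1),
      ((n + m + 1).choose (n + 1 - 1 - i) : ℤ) * (-1 : ℤ) ^ (n + 1 - 1 - i) *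
        (S2 (n + m - (n + 1 - 1 - i)) (n - (n + 1 - 1 - i)) : ℤ)
      = (-1 : ℤ) ^ n *
        ((-1 : ℤ) ^ i * ((n + m + 1).choose (m + 1 + i) : ℤ) * (S2 (i + m) i : ℤ)) := by
    intro i hi
    have hi' : i ≤ n := by simp only [Finset.mem_range] at hi; omega
    have e1 : n + 1 - 1 - i = n - i := by omega
    have e2 : n + m - (n - i) = i + m := by omega
    have e3 : n - (n - i) = i := by omega
    have e4 : (n + m + 1).choose (n - i) = (n + m + 1).choose (m + 1 + i) := by
      rw [show n - i = n + m + 1 - (m + 1 + i) by omega]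
      exact Nat.choose_symm (by omega)
    have e5 : (-1 : ℤ) ^ (n - i) = (-1 : ℤ) ^ n * (-1 : ℤ) ^ i := by
      have h1 : (-1 : ℤ) ^ (n - i) * (-1 : ℤ) ^ i = (-1 : ℤ) ^ n := by
        rw [← pow_add, Nat.sub_add_cancel hi']
      have h2 : (-1 : ℤ) ^ i * (-1 : ℤ) ^ i = 1 := by
        rw [← pow_add, ← two_mul, pow_mul]
        norm_num
      calc (-1 : ℤ) ^ (n - i) = (-1 : ℤ) ^ (n - i) * ((-1 : ℤ) ^ i * (-1 : ℤ) ^ i) := by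
            rw [h2, mul_one]
        _ = ((-1 : ℤ) ^ (n - i) * (-1 : ℤ) ^ i) * (-1 : ℤ) ^ i := by ring
        _ = (-1 : ℤ) ^ n * (-1 : ℤ) ^ i := by rw [h1]
    rw [e1, e2, e3, e4, e5]
    ring
  rw [Finset.sum_congr rfl hterm, ← Finset.mul_sum, ← hS]
  have h2 : (-1 : ℤ) ^ m * (-1 : ℤ) ^ m = 1 := by
    rw [← pow_add, ← two_mul, pow_mul]
    norm_num
  rw [pow_add]
  linear_combination (-((-1 : ℤ) ^ n * (-1 : ℤ) ^ m)) * hv - ((-1 : ℤ) ^ n * S) * h2
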